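/- Let P be a two-orbit j-intransitive convex d-polytope and let Φ be any flag of P. Then for any i ≠ j (0 ≤ i ≤ d−1), the i-adjacent flag Φ^i is in the same flag orbit as Φ; that is, there exists a symmetry ρ ∈ G(P) with ρ(Φ) = Φ^i. -/

import Mathlib

open scoped RealInnerProductSpace Pointwise

noncomputable section

/-- Euclidean `d`-space. -/
abbrev E (d : ℕ) := EuclideanSpace ℝ (Fin d)

/-- A convex `d`-polytope: the convex hull of a finite set of points in Euclidean
`d`-space whose affine hull is the whole space. -/
def IsConvexPolytope (d : ℕ) (P : Set (E d)) : Prop :=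
  (∃ S : Finset (E d), P = convexHull ℝ (S : Set (E d))) ∧ affineSpan ℝ P = ⊤

/-- The faces of `P`: the intersections of `P` with supporting hyperplanes, together
with the empty set and `P` itself; these are exactly the exposed faces of `P`. -/
def Faces (d : ℕ) (P : Set (E d)) : Type := {F : Set (E d) // IsExposed ℝ P F}

instance (d : ℕ) (P : Set (E d)) : PartialOrder (Faces d P) :=
  Subtype.partialOrder _

/-- A flag of `P`: a maximal chain in the face lattice of `P`. -/
abbrev PolyFlag (d : ℕ) (P : Set (E d)) := Flag (Faces d P)

/-- `g` is a symmetry of `P`: a Euclidean isometry carrying `P` onto itself. -/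
def IsSymmetry (d : ℕ) (P : Set (E d)) (g : E d ≃ᵢ E d) : Prop := g '' P = P

/-- The collection of faces (as subsets of space) obtained by applying `g` to the
faces of the flag `Φ`. -/
def flagImage (d : ℕ) (P : Set (E d)) (g : E d ≃ᵢ E d) (Φ : PolyFlag d P) :
    Set (Set (E d)) :=
  (fun F : Set (E d) => g '' F) '' (Subtype.val '' (Φ : Set (Faces d P)))

/-- Two flags lie in the same orbit of the symmetry group `G(P)`. -/
def FlagEquiv (d : ℕ) (P : Set (E d)) (Φ Ψ : PolyFlag d P) : Prop :=
  ∃ g : E d ≃ᵢ E d, IsSymmetry d P g ∧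
    flagImage d P g Φ = Subtype.val '' (Ψ : Set (Faces d P))

/-- `P` is a two-orbit polytope: the symmetry group has exactly two orbits on flags. -/
def IsTwoOrbit (d : ℕ) (P : Set (E d)) : Prop :=
  ∃ Φ Ψ : PolyFlag d P, ¬ FlagEquiv d P Φ Ψ ∧
    ∀ Ω : PolyFlag d P, FlagEquiv d P Ω Φ ∨ FlagEquiv d P Ω Ψ

/-- `F` is a face of `P` of rank `j`: the empty face has rank `-1`, and a nonempty face
has rank the dimension of its affine hull. -/
def IsFaceOfRank (d : ℕ) (P : Set (E d)) (F : Set (E d)) (j : ℤ) : Prop :=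
  IsExposed ℝ P F ∧
    ((j = -1 ∧ F = ∅) ∨
      (F.Nonempty ∧ j = Module.finrank ℝ (affineSpan ℝ F).direction))

/-- The symmetry group of `P` is transitive on the faces of rank `j`. -/
def TransitiveOnRank (d : ℕ) (P : Set (E d)) (j : ℤ) : Prop :=
  ∀ F G : Set (E d), IsFaceOfRank d P F j → IsFaceOfRank d P G j →
    ∃ g : E d ≃ᵢ E d, IsSymmetry d P g ∧ g '' F = G

/-- `P` is a two-orbit `j`-intransitive polytope: it has exactly two flag orbits, its
symmetry group is not transitive on the `j`-faces, but is transitive on the `i`-faces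
for every `i ≠ j` with `0 ≤ i ≤ d - 1`. -/
def IsJIntransitive (d : ℕ) (P : Set (E d)) (j : ℤ) : Prop :=
  IsTwoOrbit d P ∧ ¬ TransitiveOnRank d P j ∧
    ∀ i : ℤ, 0 ≤ i → i ≤ (d : ℤ) - 1 → i ≠ j → TransitiveOnRank d P i

/-- Flags `Φ` and `Ψ` are `i`-adjacent: they are distinct, and they share all faces
whose rank differs from `i`. -/
def IAdjacent (d : ℕ) (P : Set (E d)) (i : ℤ) (Φ Ψ : PolyFlag d P) : Prop :=
  Φ ≠ Ψ ∧ ∀ (F : Faces d P) (r : ℤ),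
    IsFaceOfRank d P F.val r → r ≠ i → (F ∈ Φ ↔ F ∈ Ψ)


/-!
If `Φ` and its `i`-adjacent flag `Ψ` lay in different orbits, every flag would be equivalent to
one of them. As `i ≠ j`, `Ψ` has the same `j`-faces as `Φ`, so every `j`-face, taken in any flag
containing it, is carried by a symmetry onto a `j`-face of `Φ`. A chain of faces contains at most
one face of each rank, so all `j`-faces would lie in one orbit, contradicting `j`-intransitivity.
-/

section Exposed

variable {V W : Type*} [NormedAddCommGroup V] [NormedSpace ℝ V]
  [NormedAddCommGroup W] [NormedSpace ℝ W]

theorem IsExposed.image_affineIsometryEquiv {A B : Set V} (f : V ≃ᵃⁱ[ℝ] W)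
    (h : IsExposed ℝ A B) : IsExposed ℝ (f '' A) (f '' B) := by
  rintro ⟨-, x, hx, rfl⟩
  obtain ⟨l, rfl⟩ := h ⟨x, hx⟩
  let l' : StrongDual ℝ W :=
    l.comp (f.linearIsometryEquiv.symm.toContinuousLinearEquiv : W →L[ℝ] V)
  obtain ⟨c, hl'⟩ : ∃ c, ∀ u, l' (f u) = l u + c := by
    refine ⟨l' (f 0), fun u => ?_⟩
    have hfu : f u = f.linearIsometryEquiv u + f 0 :=
      sub_eq_iff_eq_add.1 (by simpa using (f.map_vsub u 0).symm)
    simp [l', hfu]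
  refine ⟨l', ?_⟩
  ext y
  obtain ⟨u, rfl⟩ := f.surjective y
  simp only [Set.mem_ofPred_eq, f.injective.mem_set_image, Set.forall_mem_image, hl',
    add_le_add_iff_right]

theorem IsExposed.inter_affineSpan_subset {A B : Set V} (h : IsExposed ℝ A B) :
    A ∩ affineSpan ℝ B ⊆ B := by
  rcases B.eq_empty_or_nonempty with rfl | ⟨x, hx⟩
  · simp
  obtain ⟨l, rfl⟩ := h ⟨x, hx⟩
  have hspan : affineSpan ℝ {y ∈ A | ∀ z ∈ A, l z ≤ l y}
      ≤ (affineSpan ℝ {l x}).comap (l : V →ₗ[ℝ] ℝ).toAffineMap := by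
    refine affineSpan_le.2 fun y hy => ?_
    simpa [AffineSubspace.mem_affineSpan_singleton] using le_antisymm (hx.2 y hy.1) (hy.2 x hx.1)
  rintro y ⟨hyA, hy⟩
  have hly : l y = l x := by simpa [AffineSubspace.mem_affineSpan_singleton] using hspan hy
  exact ⟨hyA, fun z hz => hly ▸ hx.2 z hz⟩

theorem IsExposed.eq_of_subset_of_finrank_eq [FiniteDimensional ℝ V] {A B C : Set V}
    (hB : IsExposed ℝ A B) (hCA : C ⊆ A) (hBC : B ⊆ C) (hne : B.Nonempty)
    (hrank : Module.finrank ℝ (affineSpan ℝ B).direction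
      = Module.finrank ℝ (affineSpan ℝ C).direction) : B = C := by
  have hle := affineSpan_mono ℝ hBC
  have hspan : affineSpan ℝ B = affineSpan ℝ C :=
    AffineSubspace.eq_of_direction_eq_of_nonempty_of_le
      (Submodule.eq_of_le_of_finrank_eq (AffineSubspace.direction_le hle) hrank)
      ((affineSpan_nonempty ℝ).2 hne) hle
  refine hBC.antisymm fun y hy => hB.inter_affineSpan_subset ⟨hCA hy, ?_⟩
  exact hspan ▸ subset_affineSpan ℝ C hy

theorem finrank_direction_affineSpan_image (f : V ≃ᵃ[ℝ] W) (s : Set V) :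
    Module.finrank ℝ (affineSpan ℝ (f '' s)).direction
      = Module.finrank ℝ (affineSpan ℝ s).direction := by
  rw [direction_affineSpan, direction_affineSpan, ← f.coe_toAffineMap,
    ← AffineMap.map_vectorSpan]
  exact f.linear.finrank_map_eq _

end Exposed

section Symmetry

variable {d : ℕ} {P : Set (E d)}

theorem IsSymmetry.symm {g : E d ≃ᵢ E d} (hg : IsSymmetry d P g) : IsSymmetry d P g.symm := by
  rw [IsSymmetry, IsometryEquiv.image_symm]
  nth_rw 1 [← hg]
  exact g.injective.preimage_image P

theorem IsSymmetry.trans {g₁ g₂ : E d ≃ᵢ E d} (hg₁ : IsSymmetry d P g₁)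
    (hg₂ : IsSymmetry d P g₂) : IsSymmetry d P (g₁.trans g₂) := by
  change (g₂ ∘ g₁) '' P = P
  rw [Set.image_comp, hg₁, hg₂]

theorem IsSymmetry.isExposed_image {g : E d ≃ᵢ E d} (hg : IsSymmetry d P g) {F : Set (E d)}
    (hF : IsExposed ℝ P F) : IsExposed ℝ P (g '' F) := by
  have := hF.image_affineIsometryEquiv g.toRealAffineIsometryEquiv
  rwa [g.coeFn_toRealAffineIsometryEquiv, hg] at this

theorem IsSymmetry.isFaceOfRank_image {g : E d ≃ᵢ E d} (hg : IsSymmetry d P g)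
    {F : Set (E d)} {r : ℤ} (hF : IsFaceOfRank d P F r) : IsFaceOfRank d P (g '' F) r := by
  refine ⟨hg.isExposed_image hF.1, ?_⟩
  rcases hF.2 with ⟨hr, rfl⟩ | ⟨hne, rfl⟩
  · exact Or.inl ⟨hr, Set.image_empty _⟩
  · refine Or.inr ⟨hne.image _, ?_⟩
    rw [← g.coeFn_toRealAffineIsometryEquiv, ← AffineIsometryEquiv.coe_toAffineEquiv,
      finrank_direction_affineSpan_image]

end Symmetry

section Orbits

variable {d : ℕ} {P : Set (E d)}

theorem Faces.eq_of_le_of_isFaceOfRank {F G : Faces d P} {r : ℤ} (hFG : F ≤ G)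
    (hF : IsFaceOfRank d P F.val r) (hG : IsFaceOfRank d P G.val r) : F = G := by
  rcases hF.2 with ⟨rfl, hF₀⟩ | ⟨hne, rfl⟩
  · rcases hG.2 with ⟨-, hG₀⟩ | ⟨-, hG⟩
    · exact Subtype.ext (hF₀.trans hG₀.symm)
    · omega
  · rcases hG.2 with ⟨hG, -⟩ | ⟨-, hG⟩
    · omega
    · exact Subtype.ext <|
        F.prop.eq_of_subset_of_finrank_eq G.prop.subset hFG hne (by exact_mod_cast hG)

theorem PolyFlag.eq_of_isFaceOfRank {Ω : PolyFlag d P} {F G : Faces d P} {r : ℤ}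
    (hF : F ∈ Ω) (hG : G ∈ Ω) (hFr : IsFaceOfRank d P F.val r)
    (hGr : IsFaceOfRank d P G.val r) : F = G :=
  (Ω.le_or_le hF hG).elim (Faces.eq_of_le_of_isFaceOfRank · hFr hGr)
    fun h => (Faces.eq_of_le_of_isFaceOfRank h hGr hFr).symm

def FaceEquiv (d : ℕ) (P : Set (E d)) (F G : Set (E d)) : Prop :=
  ∃ g : E d ≃ᵢ E d, IsSymmetry d P g ∧ g '' F = G

theorem FaceEquiv.symm {F G : Set (E d)} (h : FaceEquiv d P F G) : FaceEquiv d P G F := by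
  obtain ⟨g, hg, rfl⟩ := h
  exact ⟨g.symm, hg.symm, g.toEquiv.symm_image_image F⟩

theorem FaceEquiv.trans {F G H : Set (E d)} (h₁ : FaceEquiv d P F G)
    (h₂ : FaceEquiv d P G H) : FaceEquiv d P F H := by
  obtain ⟨g₁, hg₁, rfl⟩ := h₁
  obtain ⟨g₂, hg₂, rfl⟩ := h₂
  exact ⟨g₁.trans g₂, hg₁.trans hg₂, Set.image_comp g₂ g₁ F⟩

theorem FaceEquiv.isFaceOfRank {F G : Set (E d)} {r : ℤ} (h : FaceEquiv d P F G)
    (hF : IsFaceOfRank d P F r) : IsFaceOfRank d P G r := by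
  obtain ⟨g, hg, rfl⟩ := h
  exact hg.isFaceOfRank_image hF

theorem FlagEquiv.symm {Φ Ψ : PolyFlag d P} (h : FlagEquiv d P Φ Ψ) : FlagEquiv d P Ψ Φ := by
  obtain ⟨g, hg, him⟩ := h
  refine ⟨g.symm, hg.symm, ?_⟩
  change (g.symm '' ·) '' (Subtype.val '' (Ψ : Set (Faces d P))) = _
  rw [← him, flagImage, Set.image_image]
  exact (Set.image_congr fun F _ => g.toEquiv.symm_image_image F).trans (Set.image_id' _)

theorem FlagEquiv.trans {Φ Ψ Ω : PolyFlag d P} (h₁ : FlagEquiv d P Φ Ψ)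
    (h₂ : FlagEquiv d P Ψ Ω) : FlagEquiv d P Φ Ω := by
  obtain ⟨g₁, hg₁, him₁⟩ := h₁
  obtain ⟨g₂, hg₂, him₂⟩ := h₂
  refine ⟨g₁.trans g₂, hg₁.trans hg₂, ?_⟩
  calc flagImage d P (g₁.trans g₂) Φ = (g₂ '' ·) '' flagImage d P g₁ Φ := by
        rw [flagImage, flagImage, Set.image_image]
        exact Set.image_congr fun F _ => Set.image_comp g₂ g₁ F
    _ = flagImage d P g₂ Ψ := by rw [him₁]; rfl
    _ = _ := him₂

theorem FlagEquiv.exists_mem_faceEquiv {Ω Ω' : PolyFlag d P} (h : FlagEquiv d P Ω Ω')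
    {F : Faces d P} (hF : F ∈ Ω) : ∃ H ∈ Ω', FaceEquiv d P F.val H.val := by
  obtain ⟨g, hg, him⟩ := h
  obtain ⟨H, hH, hgF⟩ : g '' F.val ∈ Subtype.val '' (Ω' : Set (Faces d P)) :=
    him ▸ ⟨F.val, ⟨F, hF, rfl⟩, rfl⟩
  exact ⟨H, hH, g, hg, hgF.symm⟩

theorem IsTwoOrbit.flagEquiv_or_flagEquiv (hP : IsTwoOrbit d P) {Φ Ψ : PolyFlag d P}
    (hΦΨ : ¬ FlagEquiv d P Φ Ψ) (Ω : PolyFlag d P) :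
    FlagEquiv d P Ω Φ ∨ FlagEquiv d P Ω Ψ := by
  obtain ⟨Φ₀, Ψ₀, -, hall⟩ := hP
  have hΩ := hall Ω
  have hΦ := hall Φ
  have hΨ := hall Ψ
  grind [FlagEquiv.symm, FlagEquiv.trans]

theorem transitiveOnRank_of_forall_flagEquiv_or {j : ℤ} {Φ Ψ : PolyFlag d P} (hclass : ∀ Ω, FlagEquiv d P Ω Φ ∨ FlagEquiv d P Ω Ψ)
    (hΨΦ : ∀ H : Faces d P, IsFaceOfRank d P H.val j → H ∈ Ψ → H ∈ Φ) :
    TransitiveOnRank d P j := by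
  have hΦ (F : Faces d P) (hF : IsFaceOfRank d P F.val j) :
      ∃ H ∈ Φ, IsFaceOfRank d P H.val j ∧ FaceEquiv d P F.val H.val := by
    obtain ⟨Ω, hΩ⟩ := Flag.exists_mem F
    rcases hclass Ω with hΩΦ | hΩΨ
    · obtain ⟨H, hH, hFH⟩ := hΩΦ.exists_mem_faceEquiv hΩ
      exact ⟨H, hH, hFH.isFaceOfRank hF, hFH⟩
    · obtain ⟨H, hH, hFH⟩ := hΩΨ.exists_mem_faceEquiv hΩ
      exact ⟨H, hΨΦ H (hFH.isFaceOfRank hF) hH, hFH.isFaceOfRank hF, hFH⟩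
  intro F G hF hG
  obtain ⟨H, hH, hHr, hFH⟩ := hΦ ⟨F, hF.1⟩ hF
  obtain ⟨H', hH', hH'r, hGH'⟩ := hΦ ⟨G, hG.1⟩ hG
  obtain rfl := PolyFlag.eq_of_isFaceOfRank hH hH' hHr hH'r
  exact hFH.trans hGH'.symm

end Orbits

theorem adjacent_flag_same_orbit_general (d : ℕ) (P : Set (E d))
    (j : ℤ) (hPj : IsJIntransitive d P j)
    (i : ℤ) (hij : i ≠ j)
    (Φ Ψ : PolyFlag d P) (hadj : IAdjacent d P i Φ Ψ) :
    FlagEquiv d P Φ Ψ := by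
  by_contra hΦΨ
  exact hPj.2.1 <| transitiveOnRank_of_forall_flagEquiv_or (hPj.1.flagEquiv_or_flagEquiv hΦΨ)
    fun H hH => (hadj.2 H j hH hij.symm).2

/-- **Claim 3.**
Let `P` be a two-orbit `j`-intransitive convex `d`-polytope and `Φ` any flag.  Then
for any `i ≠ j` with `0 ≤ i ≤ d - 1`, the `i`-adjacent flag `Φⁱ` is in the same flag
orbit as `Φ`: there is a symmetry `ρ ∈ G(P)` with `ρ(Φ) = Φⁱ`. -/
theorem adjacent_flag_same_orbit (d : ℕ) (P : Set (E d))
    (hP : IsConvexPolytope d P) (j : ℤ) (hPj : IsJIntransitive d P j)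
    (i : ℤ) (hi0 : 0 ≤ i) (hid : i ≤ (d : ℤ) - 1) (hij : i ≠ j)
    (Φ Ψ : PolyFlag d P) (hadj : IAdjacent d P i Φ Ψ) :
    FlagEquiv d P Φ Ψ :=
  adjacent_flag_same_orbit_general d P j hPj i hij Φ Ψ hadj
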